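/- arXiv:1405.2151 — 2 statements merged into one kernel-verified Lean document; each statement's English description precedes it below -/
import Mathlib

section
/- The free group F_α on an uncountable set α of generators admits no right quasi-invariant finitely additive probability measure. That is, there is no finitely additive probability measure μ on F_α such that for every y ∈ F_α there exists c > 0 with c·μ(Ay) ≤ μ(A) for all A ⊆ F_α. -/
open Pointwise

/-- A finitely additive probability measure on a set `X`. -/
structure FAMeasure (X : Type*) where
  m : Set X → ℝ
  nonneg : ∀ A : Set X, 0 ≤ m A
  total : m Set.univ = 1
  additive : ∀ A B : Set X, Disjoint A B → m (A ∪ B) = m A + m B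

/-- A Boolean ideal: a proper family of subsets closed under subsets and finite unions. -/
def IsBoolIdeal {X : Type*} (I : Set (Set X)) : Prop :=
  Set.univ ∉ I ∧ (∀ A ∈ I, ∀ B ⊆ A, B ∈ I) ∧ (∀ A ∈ I, ∀ B ∈ I, A ∪ B ∈ I)

/-- The `I`-difference set `Δ_I(A) = {g : gA ∩ A ∉ I}`. -/
def Delta (G : Type*) {X : Type*} [Group G] [MulAction G X] (I : Set (Set X)) (A : Set X) : Set G :=
  {g : G | g • A ∩ A ∉ I}

/-- `cov(B) ≤ n`: `B` can be covered by at most `n` left translates. -/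
def covLE {G : Type*} [Group G] (B : Set G) (n : ℕ) : Prop :=
  ∃ F : Finset G, F.card ≤ n ∧ (F : Set G) * B = Set.univ

/-- `cov(B) < n`. -/
def covLT {G : Type*} [Group G] (B : Set G) (n : ℕ) : Prop :=
  ∃ F : Finset G, F.card < n ∧ (F : Set G) * B = Set.univ

/-- Lower Darboux integral of a function against a finitely additive measure. -/
noncomputable def FAMeasure.lintegral {X : Type*} (μ : FAMeasure X) (f : X → ℝ) : ℝ :=
  sSup { r : ℝ | ∃ (n : ℕ) (c : Fin n → ℝ) (B : Fin n → Set X),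
    (Pairwise fun i j => Disjoint (B i) (B j)) ∧ (⋃ i, B i) = Set.univ ∧
    (∀ i, ∀ x ∈ B i, c i ≤ f x) ∧ r = ∑ i, c i * μ.m (B i) }

/-- Convolution `λ*μ` of a finitely additive measure on `G` with one on a `G`-space `X`. -/
noncomputable def conv {G X : Type*} [Group G] [MulAction G X]
    (lam : FAMeasure G) (mu : FAMeasure X) (B : Set X) : ℝ :=
  lam.lintegral (fun x => mu.m (x⁻¹ • B))

set_option linter.unreachableTactic false
set_option linter.unusedTactic false

open FreeGroup in
lemma red_app {α : Type*} [DecidableEq α] (t : α × Bool) :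
    ∀ (L : List (α × Bool)), reduce L = L → L.getLast? ≠ some (t.1, !t.2) →
      reduce (L ++ [t]) = L ++ [t] := by
  intro L
  induction L with
  | nil => intro _ _; simp [reduce_singleton]
  | cons x L ih =>
    intro h hlast
    have hlen : (reduce L).length ≤ L.length := Red.length_le reduce.red
    have hL : reduce L = L := by
      rw [reduce.cons] at h
      cases hr : reduce L with
      | nil => rw [hr] at h; simp at h; simp [h, hr]
      | cons hd tl =>
        rw [hr] at h
        change (if x.1 = hd.1 ∧ x.2 = !hd.2 then tl else x :: hd :: tl) = x :: L at h
        split_ifs at h with hc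
        · exfalso; rw [hr] at hlen
          rw [h] at hlen; simp at hlen
        · simp at h
          first
          | exact h
          | (rw [hr]; exact h.2 ▸ rfl)
    cases L with
    | nil =>
      simp at hlast
      show reduce [x, t] = [x, t]
      rw [reduce.cons, reduce_singleton]
      change (if x.1 = t.1 ∧ x.2 = !t.2 then [] else [x, t]) = [x, t]
      split_ifs with hc
      · exact absurd (show x = (t.1, !t.2) from Prod.ext hc.1 hc.2) hlast
      · rfl
    | cons hd tl =>
      have hlast' : (hd :: tl).getLast? ≠ some (t.1, !t.2) := by
        simpa [List.getLast?_cons_cons] using hlast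
      have hmid : reduce (hd :: tl) = hd :: tl := hL
      have hnc : ¬(x.1 = hd.1 ∧ x.2 = !hd.2) := by
        intro hc
        rw [reduce.cons, hL] at h
        change (if x.1 = hd.1 ∧ x.2 = !hd.2 then tl else x :: hd :: tl) = x :: hd :: tl at h
        rw [if_pos hc] at h
        have h2 := congrArg List.length h
        simp at h2
        omega
      have ih' := ih hmid hlast'
      show reduce (x :: ((hd :: tl) ++ [t])) = x :: ((hd :: tl) ++ [t])
      rw [reduce.cons, ih']
      change (if x.1 = hd.1 ∧ x.2 = !hd.2 then tl ++ [t] else x :: hd :: (tl ++ [t])) = _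
      rw [if_neg hnc]
      simp

lemma mul_letter {α : Type*} [DecidableEq α] (x : FreeGroup α) (t : α × Bool)
    (h : x.toWord.getLast? ≠ some (t.1, !t.2)) :
    (x * FreeGroup.mk [t]).toWord = x.toWord ++ [t] := by
  conv_lhs => rw [← FreeGroup.mk_toWord (x := x)]
  rw [FreeGroup.mul_mk, FreeGroup.toWord_mk]
  exact red_app t _ x.reduce_toWord h

lemma FAMeasure.m_empty {X : Type*} (μ : FAMeasure X) : μ.m ∅ = 0 := by
  have h := μ.additive ∅ ∅ (by simp)
  simp at h
  linarith

lemma FAMeasure.m_mono {X : Type*} (μ : FAMeasure X) {A B : Set X} (h : A ⊆ B) :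
    μ.m A ≤ μ.m B := by
  have h1 := μ.additive A (B \ A) disjoint_sdiff_self_right
  rw [Set.union_diff_cancel h] at h1
  have := μ.nonneg (B \ A)
  linarith

lemma FAMeasure.m_le_one {X : Type*} (μ : FAMeasure X) (A : Set X) : μ.m A ≤ 1 := by
  rw [← μ.total]; exact μ.m_mono (Set.subset_univ A)

lemma FAMeasure.m_union_le {X : Type*} (μ : FAMeasure X) (A B : Set X) :
    μ.m (A ∪ B) ≤ μ.m A + μ.m B := by
  have h1 := μ.additive A (B \ A) disjoint_sdiff_self_right
  rw [Set.union_diff_self] at h1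
  have h2 := μ.m_mono (Set.diff_subset : B \ A ⊆ B)
  linarith

lemma FAMeasure.m_biUnion {X ι : Type*} (μ : FAMeasure X) (S : ι → Set X) (F : Finset ι)
    (h : ∀ i ∈ F, ∀ j ∈ F, i ≠ j → Disjoint (S i) (S j)) :
    μ.m (⋃ i ∈ F, S i) = ∑ i ∈ F, μ.m (S i) := by
  classical
  induction F using Finset.induction_on with
  | empty => simpa using μ.m_empty
  | @insert i F hi ih =>
    rw [Finset.set_biUnion_insert, Finset.sum_insert hi]
    rw [μ.additive _ _ ?_, ih ?_]
    · intro j hj k hk hjk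
      exact h j (Finset.mem_insert_of_mem hj) k (Finset.mem_insert_of_mem hk) hjk
    · rw [Set.disjoint_iUnion_right]
      intro j
      rw [Set.disjoint_iUnion_right]
      intro hj
      exact h i (Finset.mem_insert_self i F) j (Finset.mem_insert_of_mem hj)
        (by rintro rfl; exact hi hj)

theorem stmt8 {α : Type*} [Uncountable α] :
    ¬ ∃ μ : FAMeasure (FreeGroup α),
      ∀ y : FreeGroup α, ∃ c : ℝ, 0 < c ∧
        ∀ A : Set (FreeGroup α), c * μ.m (A * {y}) ≤ μ.m A := by
  classical
  rintro ⟨μ, hqi⟩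
  obtain ⟨a⟩ : Nonempty α := inferInstance
  set A : Set (FreeGroup α) := {x | ∃ s, x.toWord.getLast? = some (a, s)} with hAdef
  have hofinv : (FreeGroup.of a)⁻¹ = FreeGroup.mk [(a, false)] := by
    rw [show FreeGroup.of a = FreeGroup.mk [(a, true)] from rfl, FreeGroup.inv_mk]
    simp [FreeGroup.invRev]
  -- the cover F = A ∪ A·a
  have cover : (Set.univ : Set (FreeGroup α)) ⊆ A ∪ A * {FreeGroup.of a} := by
    intro x _
    by_cases hx : x ∈ A
    · exact Or.inl hx
    · right
      have hlast : x.toWord.getLast? ≠ some (a, !false) := by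
        intro hcon
        exact hx ⟨true, by simpa using hcon⟩
      have hz : (x * FreeGroup.mk [(a, false)]).toWord = x.toWord ++ [(a, false)] :=
        mul_letter x (a, false) hlast
      have hzA : x * (FreeGroup.of a)⁻¹ ∈ A := by
        rw [hofinv]
        exact ⟨false, by rw [hz]; simp⟩
      have hxeq : (x * (FreeGroup.of a)⁻¹) * FreeGroup.of a = x := by group
      have := Set.mul_mem_mul hzA (Set.mem_singleton (FreeGroup.of a))
      rwa [hxeq] at this
  -- μ(A) > 0
  have hApos : 0 < μ.m A := by
    rcases lt_or_ge 0 (μ.m A) with h | h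
    · exact h
    · exfalso
      have hA0 : μ.m A = 0 := le_antisymm h (μ.nonneg A)
      obtain ⟨c, hc, hci⟩ := hqi (FreeGroup.of a)
      have h1 : μ.m (A * {FreeGroup.of a}) ≤ 0 := by
        have := hci A
        rw [hA0] at this
        nlinarith
      have h2 := μ.m_mono cover
      have h3 := μ.m_union_le A (A * {FreeGroup.of a})
      rw [μ.total] at h2
      linarith
  set S : α → Set (FreeGroup α) := fun b => A * {FreeGroup.of b} with hSdef
  -- each S b has positive measure
  have hSpos : ∀ b : α, 0 < μ.m (S b) := by
    intro b
    obtain ⟨c, hc, hci⟩ := hqi (FreeGroup.of b)⁻¹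
    have hSb : S b * {(FreeGroup.of b)⁻¹} = A := by
      show A * {FreeGroup.of b} * {(FreeGroup.of b)⁻¹} = A
      rw [mul_assoc, Set.singleton_mul_singleton, mul_inv_cancel, Set.singleton_one, mul_one]
    have := hci (S b)
    rw [hSb] at this
    nlinarith
  -- last letter of elements of S b
  have hlastS : ∀ b : α, b ≠ a → ∀ z ∈ S b, z.toWord.getLast? = some (b, true) := by
    intro b hb z hz
    rw [hSdef] at hz
    obtain ⟨x, hx, y, hy, rfl⟩ := hz
    rw [Set.mem_singleton_iff] at hy
    subst hy
    obtain ⟨s, hs⟩ := hx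
    have hlast : x.toWord.getLast? ≠ some (b, !true) := by
      rw [hs]
      intro hcon
      simp at hcon
      exact hb hcon.1.symm
    have := mul_letter x (b, true) hlast
    rw [show FreeGroup.mk [(b, true)] = FreeGroup.of b from rfl] at this
    rw [this]
    simp
  -- disjointness
  have hdisj : ∀ b b' : α, b ≠ a → b' ≠ a → b ≠ b' → Disjoint (S b) (S b') := by
    intro b b' hb hb' hbb'
    rw [Set.disjoint_left]
    intro z h1 h2
    have e1 := hlastS b hb z h1
    have e2 := hlastS b' hb' z h2
    rw [e1] at e2
    simp at e2
    exact hbb' e2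
  -- the sets T n are finite
  set T : ℕ → Set α := fun n => {b | b ≠ a ∧ 1 / ((n : ℝ) + 1) < μ.m (S b)} with hTdef
  have hTfin : ∀ n, (T n).Finite := by
    intro n
    by_contra hinf
    obtain ⟨F, hFsub, hFcard⟩ := Set.Infinite.exists_subset_card_eq hinf (n + 2)
    have hsum : μ.m (⋃ b ∈ F, S b) = ∑ b ∈ F, μ.m (S b) := by
      refine μ.m_biUnion S F ?_
      intro i hi j hj hij
      exact hdisj i j (hFsub hi).1 (hFsub hj).1 hij
    have hle : μ.m (⋃ b ∈ F, S b) ≤ 1 := μ.m_le_one _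
    have hlow : ∀ b ∈ F, 1 / ((n : ℝ) + 1) ≤ μ.m (S b) := by
      intro b hb
      exact le_of_lt (hFsub hb).2
    have hsumge := Finset.card_nsmul_le_sum F (fun b => μ.m (S b)) (1 / ((n : ℝ) + 1)) hlow
    rw [hFcard] at hsumge
    have hn1 : (0 : ℝ) < (n : ℝ) + 1 := by positivity
    have hkey : (1 : ℝ) < (n + 2 : ℕ) • (1 / ((n : ℝ) + 1)) := by
      rw [nsmul_eq_mul, mul_one_div, lt_div_iff₀ hn1]
      push_cast
      linarith
    linarith [hsum ▸ hle, hsumge.trans_lt' hkey]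
  -- α is countable: contradiction
  have hsub : (Set.univ : Set α) ⊆ insert a (⋃ n, T n) := by
    intro b _
    by_cases hb : b = a
    · exact Or.inl hb
    · refine Or.inr (Set.mem_iUnion.mpr ?_)
      obtain ⟨n, hn⟩ := exists_nat_gt (1 / μ.m (S b))
      refine ⟨n, hb, ?_⟩
      have hm := hSpos b
      have h1 : 1 / μ.m (S b) < (n : ℝ) + 1 := hn.trans (lt_add_one _)
      rw [div_lt_iff₀ hm] at h1
      show 1 / ((n : ℝ) + 1) < μ.m (S b)
      rw [div_lt_iff₀ (by positivity : (0:ℝ) < (n:ℝ) + 1)]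
      linarith
  have hcnt : (Set.univ : Set α).Countable :=
    Set.Countable.mono hsub ((Set.countable_iUnion fun n => (hTfin n).countable).insert a)
  exact not_countable (Set.countable_univ_iff.mp hcnt)
end

section
/- Let G be a group, μ a finitely additive probability measure on G, and suppose there exists a finitely additive probability measure ν on G with sup_{y∈G} ν(Ly) arbitrarily close to 1 for L = {x ∈ G : μ(xA) > δ} where δ < sup_{x∈G} μ(xA). If F ⊆ L is maximal such that translates xA (x ∈ F) pairwise intersect in μ-null sets, then |F| < 1/δ and L ⊆ F·AA⁻¹. -/
open Pointwise

namespace FAMeasure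

variable {X : Type*} (μ : FAMeasure X)

theorem empty' : μ.m ∅ = 0 := by
  have h := μ.additive ∅ ∅ (by simp)
  simp at h
  linarith

theorem mono' {A B : Set X} (h : A ⊆ B) : μ.m A ≤ μ.m B := by
  have hd : Disjoint A (B \ A) := Set.disjoint_sdiff_right
  have h1 := μ.additive A (B \ A) hd
  rw [Set.union_diff_cancel h] at h1
  have := μ.nonneg (B \ A)
  linarith

theorem union_le' (A B : Set X) : μ.m (A ∪ B) ≤ μ.m A + μ.m B := by
  have h1 := μ.additive A (B \ A) Set.disjoint_sdiff_right
  rw [Set.union_diff_self] at h1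
  have h2 := μ.mono' (Set.diff_subset : B \ A ⊆ B)
  linarith

theorem le_union' (A B : Set X) : μ.m A + μ.m B - μ.m (B ∩ A) ≤ μ.m (A ∪ B) := by
  have h1 := μ.additive A (B \ A) Set.disjoint_sdiff_right
  rw [Set.union_diff_self] at h1
  have h2 := μ.additive (B ∩ A) (B \ A)
    (Set.disjoint_left.mpr fun x hx hx2 => hx2.2 hx.2)
  rw [Set.inter_union_diff] at h2
  linarith

theorem biUnion_le' {ι : Type*} (S : Finset ι) (f : ι → Set X) :
    μ.m (⋃ i ∈ S, f i) ≤ ∑ i ∈ S, μ.m (f i) := by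
  classical
  induction S using Finset.induction with
  | empty => simp [μ.empty']
  | insert _ _ ha ih =>
    rw [Finset.set_biUnion_insert, Finset.sum_insert ha]
    calc μ.m _ ≤ _ := μ.union_le' _ _
    _ ≤ _ := by linarith

theorem sum_le_biUnion' {G : Type*} [Group G] (μ : FAMeasure G) (A : Set G) (S : Finset G)
    (hnull : ∀ x ∈ S, ∀ y ∈ S, x ≠ y → μ.m (x • A ∩ y • A) = 0) :
    ∑ x ∈ S, μ.m (x • A) ≤ μ.m (⋃ x ∈ S, x • A) := by
  classical
  induction S using Finset.induction with
  | empty => simp [μ.empty']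
  | @insert a S ha ih =>
    rw [Finset.set_biUnion_insert, Finset.sum_insert ha]
    have hz : μ.m (⋃ x ∈ S, x • A ∩ a • A) = 0 := by
      have h1 := μ.biUnion_le' S (fun x => x • A ∩ a • A)
      have h2 : ∑ x ∈ S, μ.m (x • A ∩ a • A) = 0 := by
        apply Finset.sum_eq_zero
        intro x hx
        exact hnull x (Finset.mem_insert_of_mem hx) a (Finset.mem_insert_self a S)
          (fun h => ha (h ▸ hx))
      have h3 := μ.nonneg (⋃ x ∈ S, x • A ∩ a • A)
      linarith
    have key := μ.le_union' (a • A) (⋃ x ∈ S, x • A)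
    have heq : (⋃ x ∈ S, x • A) ∩ a • A = ⋃ x ∈ S, x • A ∩ a • A := by
      ext w; simp [Set.mem_iUnion]; tauto
    rw [heq, hz] at key
    have ih' := ih (fun x hx y hy hxy =>
      hnull x (Finset.mem_insert_of_mem hx) y (Finset.mem_insert_of_mem hy) hxy)
    linarith

end FAMeasure

theorem stmt10 {G : Type*} [Group G] (μ ν : FAMeasure G) (A : Set G) (δ : ℝ)
    (hδ0 : 0 < δ) (hδ : δ < ⨆ x : G, μ.m (x • A))
    (hν : ∀ ε : ℝ, 0 < ε → ∃ y : G, 1 - ε < ν.m ({x : G | δ < μ.m (x • A)} * {y}))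
    (F : Set G) (hFL : F ⊆ {x : G | δ < μ.m (x • A)})
    (hnull : ∀ x ∈ F, ∀ y ∈ F, x ≠ y → μ.m (x • A ∩ y • A) = 0)
    (hmax : ∀ F' ⊆ {x : G | δ < μ.m (x • A)}, F ⊆ F' →
      (∀ x ∈ F', ∀ y ∈ F', x ≠ y → μ.m (x • A ∩ y • A) = 0) → F' = F) :
    ∃ h : F.Finite, (h.toFinset.card : ℝ) < 1 / δ ∧
      {x : G | δ < μ.m (x • A)} ⊆ F * (A * A⁻¹) := by
  classical
  -- A is nonempty
  have hAne : A.Nonempty := by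
    by_contra hA
    rw [Set.not_nonempty_iff_eq_empty] at hA
    subst hA
    simp only [Set.smul_set_empty] at hδ
    rw [FAMeasure.empty' μ] at hδ
    simp at hδ
    linarith
  obtain ⟨a0, ha0⟩ := hAne
  set L := {x : G | δ < μ.m (x • A)} with hL
  -- any finset inside F has sum ≤ 1
  have hsum : ∀ S : Finset G, ↑S ⊆ F → ∑ x ∈ S, μ.m (x • A) ≤ 1 := by
    intro S hS
    have h1 := FAMeasure.sum_le_biUnion' μ A S (fun x hx y hy hxy =>
      hnull x (hS hx) y (hS hy) hxy)
    have h2 := μ.mono' (Set.subset_univ (⋃ x ∈ S, x • A))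
    rw [μ.total] at h2
    linarith
  have hcard : ∀ S : Finset G, ↑S ⊆ F → (S.card : ℝ) < 1 / δ := by
    intro S hS
    rcases S.eq_empty_or_nonempty with rfl | hSne
    · simpa using one_div_pos.mpr hδ0
    · have hlt : (S.card : ℝ) * δ < ∑ x ∈ S, μ.m (x • A) := by
        have := Finset.sum_lt_sum_of_nonempty hSne
          (f := fun _ => δ) (g := fun x => μ.m (x • A))
          (fun x hx => hFL (hS hx))
        simpa [mul_comm] using this
      have := hsum S hS
      rw [lt_div_iff₀ hδ0]
      linarith
  -- F is finite
  have hfin : F.Finite := by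
    by_contra hinf
    have hinf : F.Infinite := hinf
    obtain ⟨S, hSsub, hScard⟩ := hinf.exists_subset_card_eq (⌈1 / δ⌉₊ + 1)
    have h1 := hcard S hSsub
    rw [hScard] at h1
    have h2 : (1 : ℝ) / δ ≤ ⌈1 / δ⌉₊ := Nat.le_ceil _
    push_cast at h1
    linarith
  refine ⟨hfin, ?_, ?_⟩
  · exact hcard hfin.toFinset (by simp)
  · intro z hz
    by_contra hzn
    have hmem : a0 * a0⁻¹ ∈ A * A⁻¹ := Set.mul_mem_mul ha0 (Set.inv_mem_inv.mpr ha0)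
    have hzF : z ∉ F := by
      intro hzF
      have := Set.mul_mem_mul hzF hmem
      rw [mul_inv_cancel] at this
      rw [mul_one] at this
      exact hzn this
    have hdisj : ∀ x ∈ F, z • A ∩ x • A = ∅ := by
      intro x hx
      rw [Set.eq_empty_iff_forall_notMem]
      rintro w ⟨⟨a, ha, rfl⟩, ⟨b, hb, hw⟩⟩
      apply hzn
      have hz2 : z = x * (b * a⁻¹) := by
        have : x * b = z * a := hw
        group
        rw [this]
        group
      rw [hz2]
      exact Set.mul_mem_mul hx (Set.mul_mem_mul hb (Set.inv_mem_inv.mpr ha))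
    have heq := hmax (insert z F) ?_ (Set.subset_insert z F) ?_
    · exact hzF (heq ▸ Set.mem_insert z F)
    · exact Set.insert_subset hz hFL
    · intro x hx y hy hxy
      rcases hx with rfl | hx <;> rcases hy with rfl | hy
      · exact absurd rfl hxy
      · rw [hdisj y hy, μ.empty']
      · rw [Set.inter_comm, hdisj x hx, μ.empty']
      · exact hnull x hx y hy hxy
end
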